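/- arXiv:1607.03432 — 6 statements merged into one kernel-verified Lean document; each statement's English description precedes it below -/
import Mathlib

section
/- For every finite set U and every d ≥ 2, there exists a d-detecting family F ⊆ 2^U of size at most C·|U|·log d / log |U| for some absolute constant C (for |U| ≥ 2), i.e., a family of subsets such that any two distinct functions f, g : U → {0,...,d−1} are distinguished by some S ∈ F via differing sums ∑_{x∈S} f(x) ≠ ∑_{x∈S} g(x). -/
/-!
Label the elements of `U` injectively by pairs `(T, j)`, where `T` is a majority subset of a
`(2u+1)`-set `B` and `j < k`, and attach to each label a family `𝒞` of subsets of `T` whose signed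
count `∑_{R ∈ 𝒞} (-1)^|R|` is `d^j`. Every `S ⊆ B` gives the test set of those `a` with
`S ∩ T_a ∈ 𝒞_a`. If `δ = f - g ≠ 0` has zero sum over every test set, weight the equation of `S`
by `(-1)^|S ∩ T₀|`, where `T₀` is a maximal label among the support of `δ`, and sum over `S`:
the contribution of `a` vanishes unless `T_a = T₀`, and what is left is
`∑_{T_a = T₀} δ_a d^{j_a} = 0`, impossible since `|δ_a| < d` and the `j_a` are distinct.
These `2^(2u+1)` tests handle `4^u k` elements with `k ≈ u / log₂ d`, which gives a family of
size `O(|U| log d / log |U|)`; when `|U|` is at most a power of `d`, singletons are good enough.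
-/

open Finset

namespace DetectingFamily

def IsDetecting {α : Type*} (d : ℕ) (F : Finset (Finset α)) : Prop :=
  ∀ f g : α → Fin d, f ≠ g → ∃ S ∈ F, ∑ x ∈ S, (f x : ℕ) ≠ ∑ x ∈ S, (g x : ℕ)

theorem isDetecting_of_forall_sum_ne_zero {α : Type*} {d : ℕ} {F : Finset (Finset α)}
    (h : ∀ δ : α → ℤ, (∀ a, |δ a| < d) → δ ≠ 0 → ∃ S ∈ F, ∑ a ∈ S, δ a ≠ 0) :
    IsDetecting d F := by
  intro f g hfg
  obtain ⟨S, hS, hne⟩ := h (fun a => (f a : ℤ) - g a)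
    (fun a => abs_sub_lt_iff.2 ⟨by omega, by omega⟩)
    (fun h0 => hfg (funext fun a => Fin.ext (by simpa [sub_eq_zero] using congrFun h0 a)))
  refine ⟨S, hS, fun heq => hne ?_⟩
  rw [sum_sub_distrib, sub_eq_zero]
  exact_mod_cast heq

theorem isDetecting_singletons {α : Type*} [Fintype α] (d : ℕ) :
    IsDetecting d (univ.map ⟨singleton, singleton_injective⟩ : Finset (Finset α)) :=
  isDetecting_of_forall_sum_ne_zero fun δ _ hδ => by
    obtain ⟨a, ha⟩ := Function.ne_iff.1 hδ
    exact ⟨{a}, mem_map_of_mem _ (mem_univ a), by simpa using ha⟩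

def signedCard {β : Type*} (𝒞 : Finset (Finset β)) : ℤ := ∑ R ∈ 𝒞, (-1) ^ #R

theorem exists_subset_powerset_signedCard_eq {β : Type*} {T : Finset β}
    (hT : T.Nonempty) {m : ℕ} (hm : m ≤ 2 ^ (#T - 1)) :
    ∃ 𝒞 ⊆ T.powerset, signedCard 𝒞 = m := by
  have hE : 2 ^ (#T - 1) ≤ #{R ∈ T.powerset | Even #R} := by
    have hsum := sum_powerset_neg_one_pow_card_of_nonempty hT
    rw [← sum_filter_add_sum_filter_not _ (fun R => Even #R),
      sum_congr rfl fun R hR => (mem_filter.1 hR).2.neg_one_pow,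
      sum_congr rfl fun R hR => (Nat.not_even_iff_odd.1 (mem_filter.1 hR).2).neg_one_pow] at hsum
    have hcard := card_filter_add_card_filter_not (s := T.powerset) (fun R => Even #R)
    rw [card_powerset, ← Nat.two_pow_pred_add_two_pow_pred (card_pos.2 hT)] at hcard
    simp only [sum_const, nsmul_eq_mul, mul_one, mul_neg] at hsum
    omega
  obtain ⟨𝒞, h𝒞E, h𝒞⟩ := exists_subset_card_eq (hm.trans hE)
  refine ⟨𝒞, h𝒞E.trans (filter_subset _ _), ?_⟩
  rw [signedCard, sum_congr rfl fun R hR => (mem_filter.1 (h𝒞E hR)).2.neg_one_pow, sum_const, h𝒞]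
  simp

section SignedSums

variable {β : Type*} [Fintype β] [DecidableEq β]

theorem sum_neg_one_pow_card_inter_eq_zero {T₀ T : Finset β} (h : ¬T₀ ⊆ T)
    (𝒞 : Finset (Finset β)) : ∑ S with S ∩ T ∈ 𝒞, (-1 : ℤ) ^ #(S ∩ T₀) = 0 := by
  obtain ⟨x, hx₀, hx⟩ := not_subset.1 h
  have htoggle : ∀ S, x ∉ S → (-1 : ℤ) ^ #(insert x S ∩ T₀) = -(-1) ^ #(S ∩ T₀) := fun S hS => by
    rw [insert_inter_of_mem hx₀, card_insert_of_notMem (fun h => hS (mem_inter.1 h).1), pow_succ,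
      mul_neg_one]
  rw [sum_filter, ← powerset_univ, ← insert_erase (mem_univ x),
    sum_powerset_insert (notMem_erase x _), ← sum_add_distrib]
  refine sum_eq_zero fun S hS => ?_
  have hxS : x ∉ S := fun h => notMem_erase x _ (mem_powerset.1 hS h)
  rw [insert_inter_of_notMem hx, htoggle S hxS]
  split_ifs <;> simp

theorem sum_inter_eq_two_pow_smul {M : Type*} [AddCommMonoid M] (T : Finset β)
    (g : Finset β → M) : ∑ S, g (S ∩ T) = 2 ^ #Tᶜ • ∑ R ∈ T.powerset, g R := by
  suffices ∀ U : Finset β, Disjoint U T →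
      ∑ S ∈ (T ∪ U).powerset, g (S ∩ T) = 2 ^ #U • ∑ R ∈ T.powerset, g R by
    simpa using this Tᶜ disjoint_compl_left
  intro U
  induction U using Finset.induction_on with
  | empty =>
    intro _
    simp only [union_empty, card_empty, pow_zero, one_smul]
    exact sum_congr rfl fun S hS => by rw [inter_eq_left.2 (mem_powerset.1 hS)]
  | insert x U hxU ih =>
    intro hdisj
    have hxT : x ∉ T := disjoint_left.1 hdisj (mem_insert_self x U)
    rw [union_insert, sum_powerset_insert (by simp [hxT, hxU])]
    simp only [insert_inter_of_notMem hxT, ih (disjoint_of_subset_left (subset_insert x U) hdisj),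
      card_insert_of_notMem hxU, pow_succ, mul_smul, two_smul, smul_add]

theorem sum_neg_one_pow_card_inter_self {T : Finset β} {𝒞 : Finset (Finset β)}
    (h𝒞 : 𝒞 ⊆ T.powerset) :
    ∑ S with S ∩ T ∈ 𝒞, (-1 : ℤ) ^ #(S ∩ T) = 2 ^ #Tᶜ * signedCard 𝒞 := by
  rw [signedCard, sum_filter,
    sum_inter_eq_two_pow_smul T (fun R => if R ∈ 𝒞 then (-1 : ℤ) ^ #R else 0),
    ← sum_filter, filter_mem_eq_inter, inter_eq_right.2 h𝒞, nsmul_eq_mul]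
  push_cast; rfl

end SignedSums

theorem four_pow_le_card_majority {β : Type*} [Fintype β] [DecidableEq β] {u : ℕ}
    (hβ : Fintype.card β = 2 * u + 1) : 4 ^ u ≤ #{T : Finset β | u < #T} := by
  have hcompl : #{T : Finset β | ¬u < #T} ≤ #{T : Finset β | u < #T} :=
    card_le_card_of_injOn (·ᶜ) (fun T hT => by simp_all [card_compl]; omega)
      compl_injective.injOn
  have htotal := card_filter_add_card_filter_not (s := univ) fun T : Finset β => u < #T
  rw [card_univ, Fintype.card_finset, hβ, pow_succ, pow_mul] at htotal
  norm_num only at htotal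
  omega

theorem eq_zero_of_sum_mul_pow_eq_zero {ι : Type*} {s : Finset ι} {e : ι → ℕ}
    (he : Set.InjOn e s) {D : ℤ} {c : ι → ℤ} (hc : ∀ i ∈ s, |c i| < D)
    (h : ∑ i ∈ s, c i * D ^ e i = 0) : ∀ i ∈ s, c i = 0 := by
  classical
  by_contra! ⟨i, hi, hci⟩
  -- the nonzero digit of lowest weight is divisible by `D`
  obtain ⟨i₀, hi₀, hmin⟩ := exists_min_image {i ∈ s | c i ≠ 0} e ⟨i, mem_filter.2 ⟨hi, hci⟩⟩
  obtain ⟨hi₀s, hci₀⟩ := mem_filter.1 hi₀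
  have hsplit : ∑ i ∈ s, c i * D ^ e i =
      D ^ e i₀ * (c i₀ + D * ∑ j ∈ {i ∈ s | c i ≠ 0}.erase i₀, c j * D ^ (e j - e i₀ - 1)) := by
    rw [← sum_filter_of_ne fun i _ hi => left_ne_zero_of_mul hi, ← add_sum_erase _ _ hi₀,
      mul_add, mul_sum, mul_sum, mul_comm]
    congr 1
    refine sum_congr rfl fun j hj => ?_
    obtain ⟨hji₀, hj⟩ := mem_erase.1 hj
    have hlt : e i₀ < e j :=
      (hmin j hj).lt_of_ne fun hje => hji₀ (he (mem_filter.1 hj).1 hi₀s hje.symm)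
    obtain ⟨k, hk⟩ := Nat.exists_eq_add_of_lt hlt
    rw [hk, show e i₀ + k + 1 - e i₀ - 1 = k by omega, pow_add, pow_add]
    ring
  have hD : D ^ e i₀ ≠ 0 := pow_ne_zero _ ((abs_nonneg _).trans_lt (hc i hi)).ne'
  rw [hsplit, mul_eq_zero, or_iff_right hD, add_eq_zero_iff_eq_neg] at h
  exact hci₀ (Int.eq_zero_of_abs_lt_dvd (h ▸ (dvd_mul_right _ _).neg_right) (hc i₀ hi₀s))

section Detection

variable {α β : Type*} [Fintype α] [Fintype β] [DecidableEq β]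

def testSet (T : α → Finset β) (𝒞 : α → Finset (Finset β)) (S : Finset β) : Finset α :=
  {a | S ∩ T a ∈ 𝒞 a}

variable {T : α → Finset β} {𝒞 : α → Finset (Finset β)} {δ : α → ℤ}

theorem sum_mul_signedCard_eq_zero_of_maximal (h𝒞 : ∀ a, 𝒞 a ⊆ (T a).powerset)
    (hδ : ∀ S, ∑ a ∈ testSet T 𝒞 S, δ a = 0) {T₀ : Finset β}
    (hmax : ∀ a, δ a ≠ 0 → T₀ ⊆ T a → T a = T₀) :
    ∑ a with T a = T₀, δ a * signedCard (𝒞 a) = 0 := by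
  have hterm : ∀ a, δ a * ∑ S with S ∩ T a ∈ 𝒞 a, (-1 : ℤ) ^ #(S ∩ T₀) =
      if T a = T₀ then 2 ^ #T₀ᶜ * (δ a * signedCard (𝒞 a)) else 0 := fun a => by
    split_ifs with hT
    · rw [← hT, sum_neg_one_pow_card_inter_self (h𝒞 a)]
      ring
    · by_cases hδa : δ a = 0
      · rw [hδa, zero_mul]
      · rw [sum_neg_one_pow_card_inter_eq_zero (fun hsub => hT (hmax a hδa hsub)), mul_zero]
  have hswap : ∑ S, (-1 : ℤ) ^ #(S ∩ T₀) * ∑ a ∈ testSet T 𝒞 S, δ a =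
      ∑ a, δ a * ∑ S with S ∩ T a ∈ 𝒞 a, (-1 : ℤ) ^ #(S ∩ T₀) := by
    simp only [testSet, sum_filter, mul_sum]
    rw [sum_comm]
    refine sum_congr rfl fun a _ => sum_congr rfl fun S _ => ?_
    split_ifs <;> ring
  simp only [hδ, mul_zero, sum_const_zero, hterm] at hswap
  rw [← sum_filter, ← mul_sum] at hswap
  exact (mul_eq_zero.1 hswap.symm).resolve_left (by positivity)

theorem exists_sum_mul_signedCard_eq_zero (h𝒞 : ∀ a, 𝒞 a ⊆ (T a).powerset)
    (hδ : ∀ S, ∑ a ∈ testSet T 𝒞 S, δ a = 0) (hδ₀ : δ ≠ 0) :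
    ∃ a₀, δ a₀ ≠ 0 ∧ ∑ a with T a = T a₀, δ a * signedCard (𝒞 a) = 0 := by
  obtain ⟨a₁, ha₁⟩ := Function.ne_iff.1 hδ₀
  obtain ⟨a₀, ha₀, hmax⟩ :=
    exists_max_image {a | δ a ≠ 0} (fun a => #(T a)) ⟨a₁, mem_filter.2 ⟨mem_univ _, ha₁⟩⟩
  refine ⟨a₀, (mem_filter.1 ha₀).2,
    sum_mul_signedCard_eq_zero_of_maximal h𝒞 hδ fun a ha hsub => ?_⟩
  exact (eq_of_subset_of_card_le hsub (hmax a (mem_filter.2 ⟨mem_univ _, ha⟩))).symm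

end Detection

theorem exists_isDetecting_card_le {α : Type*} [Fintype α] {d u k : ℕ} (hd : 0 < d)
    (hk : d ^ k ≤ 2 ^ u) (hα : Fintype.card α ≤ 4 ^ u * k) :
    ∃ F : Finset (Finset α), #F ≤ 2 * 4 ^ u ∧ IsDetecting d F := by
  classical
  have hcap :
      Fintype.card α ≤ #(({T | u < #T} : Finset (Finset (Fin (2 * u + 1)))) ×ˢ range k) := by
    rw [card_product, card_range]
    exact hα.trans (Nat.mul_le_mul_right k (four_pow_le_card_majority (Fintype.card_fin _)))
  obtain ⟨ι, hι⟩ := Function.Embedding.exists_of_card_le_finset hcap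
  have hιmem : ∀ a, u < #(ι a).1 ∧ (ι a).2 < k := fun a => by simpa using hι ⟨a, rfl⟩
  have hweight : ∀ a, ∃ 𝒞 ⊆ (ι a).1.powerset, signedCard 𝒞 = d ^ (ι a).2 := fun a => by
    obtain ⟨hT, hJ⟩ := hιmem a
    refine exists_subset_powerset_signedCard_eq (card_pos.1 (by omega)) ?_
    calc d ^ (ι a).2 ≤ d ^ k := Nat.pow_le_pow_right hd hJ.le
      _ ≤ 2 ^ u := hk
      _ ≤ 2 ^ (#(ι a).1 - 1) := Nat.pow_le_pow_right two_pos (by omega)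
  choose 𝒞 h𝒞 hw using hweight
  refine ⟨univ.image (testSet (fun a => (ι a).1) 𝒞), ?_,
    isDetecting_of_forall_sum_ne_zero fun δ hδd hδ₀ => ?_⟩
  · refine card_image_le.trans ?_
    rw [card_univ, Fintype.card_finset, Fintype.card_fin, pow_succ, pow_mul]
    norm_num [mul_comm]
  by_contra! hsums
  obtain ⟨a₀, ha₀, hsum⟩ := exists_sum_mul_signedCard_eq_zero h𝒞
    (fun S => hsums _ (mem_image_of_mem _ (mem_univ S))) hδ₀
  simp only [hw] at hsum
  refine ha₀ (eq_zero_of_sum_mul_pow_eq_zero ?_ (fun a _ => hδd a) hsum a₀ (by simp))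
  intro a ha b hb hab
  exact ι.injective (Prod.ext ((mem_filter.1 ha).2.trans (mem_filter.1 hb).2.symm) hab)

theorem exists_le_four_pow_mul_div (n r : ℕ) (hr : 0 < r) :
    ∃ u, n ≤ 4 ^ u * (u / r) ∧ (n ≤ 2 * 16 ^ r ∨ n ≤ 8 ^ u ∧ u * 4 ^ u ≤ 8 * r * n) := by
  have hex : ∃ u, n ≤ 4 ^ u * (u / r) :=
    ⟨r * n, by rw [Nat.mul_div_cancel_left n hr]; exact Nat.le_mul_of_pos_left n (by positivity)⟩
  set u := Nat.find hex
  have hcap : n ≤ 4 ^ u * (u / r) := Nat.find_spec hex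
  refine ⟨u, hcap, ?_⟩
  rcases le_or_gt u (2 * r) with hu | hu
  · left
    calc n ≤ 4 ^ u * (u / r) := hcap
      _ ≤ 4 ^ (2 * r) * 2 :=
        Nat.mul_le_mul (Nat.pow_le_pow_right (by norm_num) hu) (Nat.div_le_of_le_mul (by omega))
      _ = 2 * 16 ^ r := by rw [pow_mul]; ring
  right
  constructor
  · calc n ≤ 4 ^ u * (u / r) := hcap
      _ ≤ 4 ^ u * 2 ^ u :=
        Nat.mul_le_mul_left _ ((Nat.div_le_self u r).trans Nat.lt_two_pow_self.le)
      _ = 8 ^ u := by rw [← mul_pow]; norm_num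
  have hmin : 4 ^ (u - 1) * ((u - 1) / r) < n := not_le.1 (Nat.find_min hex (by omega))
  have hq : u - 1 < r * ((u - 1) / r) + r := by
    have := Nat.lt_mul_div_succ (u - 1) hr
    rwa [mul_add, mul_one] at this
  have hpow : 4 ^ u = 4 * 4 ^ (u - 1) := by rw [← pow_succ']; congr 1; omega
  calc u * 4 ^ u ≤ 2 * (r * ((u - 1) / r)) * 4 ^ u := Nat.mul_le_mul_right _ (by omega)
    _ = 8 * r * (4 ^ (u - 1) * ((u - 1) / r)) := by rw [hpow]; ring
    _ ≤ 8 * r * n := Nat.mul_le_mul_left _ hmin.le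

theorem log_le_nine_mul_log_of_le_two_mul_sixteen_pow {n r d : ℕ} (hn : n ≤ 2 * 16 ^ r)
    (hr : 2 ^ r ≤ d ^ 2) (hd : 2 ≤ d) : Real.log n ≤ 9 * Real.log d := by
  have hnd : n ≤ d ^ 9 := calc
    n ≤ 2 * (2 ^ r) ^ 4 := by rwa [← pow_mul, mul_comm r, pow_mul]
    _ ≤ d * (d ^ 2) ^ 4 := by gcongr
    _ = d ^ 9 := by ring
  rcases Nat.eq_zero_or_pos n with rfl | hn0
  · simpa using Real.log_nonneg (show (1 : ℝ) ≤ d by exact_mod_cast (by omega : 1 ≤ d))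
  simpa using Real.log_le_log (by positivity) (show (n : ℝ) ≤ d ^ 9 by exact_mod_cast hnd)

theorem mul_log_le_of_le_two_mul_four_pow {m n u r d : ℕ} (hm : m ≤ 2 * 4 ^ u) (hn : n ≤ 8 ^ u)
    (hu : u * 4 ^ u ≤ 8 * r * n) (hr : 2 ^ r ≤ d ^ 2) :
    m * Real.log n ≤ 96 * n * Real.log d := by
  rcases Nat.eq_zero_or_pos n with rfl | hn0
  · simp
  have hlogn : Real.log n ≤ 3 * u * Real.log 2 := by
    calc Real.log n ≤ Real.log ((2 ^ 3 : ℝ) ^ u) :=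
          Real.log_le_log (by positivity) (by norm_num; exact_mod_cast hn)
      _ = 3 * u * Real.log 2 := by rw [← pow_mul, Real.log_pow]; push_cast; ring
  have hlogr : r * Real.log 2 ≤ 2 * Real.log d := by
    have := Real.log_le_log (by positivity) (show (2 : ℝ) ^ r ≤ (d : ℝ) ^ 2 by exact_mod_cast hr)
    rwa [Real.log_pow, Real.log_pow, Nat.cast_two] at this
  have hm' : (m : ℝ) ≤ 2 * 4 ^ u := by exact_mod_cast hm
  have hu' : (u : ℝ) * 4 ^ u ≤ 8 * r * n := by exact_mod_cast hu
  calc m * Real.log n ≤ 2 * 4 ^ u * (3 * u * Real.log 2) :=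
        mul_le_mul hm' hlogn (Real.log_nonneg (by exact_mod_cast hn0)) (by positivity)
    _ = 6 * Real.log 2 * (u * 4 ^ u) := by ring
    _ ≤ 6 * Real.log 2 * (8 * r * n) := by gcongr
    _ = 48 * n * (r * Real.log 2) := by ring
    _ ≤ 48 * n * (2 * Real.log d) := by gcongr
    _ = 96 * n * Real.log d := by ring

end DetectingFamily

open DetectingFamily

/-- Existence of small `d`-detecting families. -/
theorem exists_detecting_family :
    ∃ C : ℝ, 0 < C ∧
      ∀ (α : Type) [Fintype α] [DecidableEq α] (d : ℕ), 2 ≤ d →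
        2 ≤ Fintype.card α →
        ∃ F : Finset (Finset α),
          (F.card : ℝ) ≤ C * (Fintype.card α) * Real.log d / Real.log (Fintype.card α) ∧
          ∀ f g : α → Fin d, f ≠ g →
            ∃ S ∈ F, ∑ x ∈ S, (f x : ℕ) ≠ ∑ x ∈ S, (g x : ℕ) := by
  refine ⟨96, by norm_num, fun α _ _ d hd hα => ?_⟩
  set n := Fintype.card α
  set r := Nat.log 2 d + 1
  have hdr : d < 2 ^ r := Nat.lt_pow_succ_log_self one_lt_two d
  have hrd : 2 ^ r ≤ d ^ 2 := by
    rw [pow_succ, sq]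
    exact Nat.mul_le_mul (Nat.pow_log_le_self 2 (by omega)) hd
  have hlog : 0 < Real.log n := Real.log_pos (by exact_mod_cast hα)
  obtain ⟨u, hcap, hsmall | ⟨hn, hu⟩⟩ := exists_le_four_pow_mul_div n r (by omega)
  · refine ⟨univ.map ⟨singleton, singleton_injective⟩, (le_div_iff₀ hlog).2 ?_,
      isDetecting_singletons d⟩
    rw [card_map, card_univ]
    have := log_le_nine_mul_log_of_le_two_mul_sixteen_pow hsmall hrd hd
    nlinarith [Real.log_pos (show (1 : ℝ) < d by exact_mod_cast hd)]
  · have hk : d ^ (u / r) ≤ 2 ^ u := calc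
      d ^ (u / r) ≤ (2 ^ r) ^ (u / r) := Nat.pow_le_pow_left hdr.le _
      _ ≤ 2 ^ u := by rw [← pow_mul]; exact Nat.pow_le_pow_right two_pos (Nat.mul_div_le u r)
    obtain ⟨F, hF, hdet⟩ := exists_isDetecting_card_le (by omega) hk hcap
    exact ⟨F, (le_div_iff₀ hlog).2 (mul_log_le_of_le_two_mul_four_pow hF hn hu hrd), hdet⟩
end

section
/- For positive integers a, b with a > 2b, every graph homomorphism from the Kneser graph KG_{a,b} to itself is an automorphism (i.e., a graph isomorphism). -/
/-!
An endomorphism `φ` of the Kneser graph `KG(n, k)` pulls each star `{v | i ∈ v}` back to an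
intersecting family of `k`-sets. Every vertex lies in exactly `k` of these `n` families, so by the
Erdős–Ko–Rado bound each of them has the maximal size `C(n-1, k-1)`, and by the equality case of
Erdős–Ko–Rado it is itself a star `{v | σ i ∈ v}`. Hence `φ v = σ⁻¹ v`; as all these preimages of
`k`-sets have size `k`, `σ` is a permutation and `φ` is the automorphism induced by `σ⁻¹`.

The equality case is proved with Katona's cycle method. A maximum intersecting family contains
exactly `k` arcs of every cyclic order, and these are consecutive. Arranging a cyclic order around
two members `A, B` with `A ∩ B = {z}` shows that every `k`-set `{z} ∪ W` with `W ⊆ A ∪ B` is a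
member; a member avoiding `z` would then confine the whole family to the `(2k-1)`-set `A ∪ B`,
which has fewer than `C(n-1, k-1)` subsets of size `k`.
-/

open Finset

variable {n k : ℕ}

/-- The arcs `{p, …, p + k - 1}` and `{q, …, q + k - 1}` of `ℤ/n` meet (for `p, q < n`). -/
def ArcsMeet (n k p q : ℕ) : Prop :=
  p < q + k ∧ q < p + k ∨ p + n < q + k ∨ q + n < p + k

lemma arcsMeet_of_mod_eq {p q t s : ℕ} (hp : p < n) (hq : q < n) (ht : t < k) (hs : s < k)
    (hkn : k ≤ n) (h : (p + t) % n = (q + s) % n) : ArcsMeet n k p q := by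
  have reduce : ∀ x < 2 * n, x % n = x ∧ x < n ∨ x % n + n = x := fun x hx => by
    rcases lt_or_ge x n with hxn | hxn
    · exact .inl ⟨Nat.mod_eq_of_lt hxn, hxn⟩
    · rw [Nat.mod_eq_sub_mod hxn, Nat.mod_eq_of_lt (by omega)]; omega
  unfold ArcsMeet
  rcases reduce (p + t) (by omega) with h1 | h1 <;>
    rcases reduce (q + s) (by omega) with h2 | h2 <;> omega

lemma ZMod.natCast_eq_natCast_iff_of_lt {t s : ℕ} (ht : t < n) (hs : s < n) :
    (t : ZMod n) = s ↔ t = s := by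
  rw [ZMod.natCast_eq_natCast_iff', Nat.mod_eq_of_lt ht, Nat.mod_eq_of_lt hs]

/-- Katona's injection: an arc meeting the arc `{0, …, k - 1}` starts either at some `d < k` or at
`n - k + d` (ending at `d - 1`), and is sent to `d`. Two arcs sent to the same `d` are disjoint. -/
def arcOffset (n k d : ℕ) : ℕ := if d < k then d else d + k - n

section Positions

variable [NeZero n] {J : Finset (ZMod n)}

lemma arcOffset_injOn (hkn : 2 * k ≤ n) (h0 : 0 ∈ J)
    (hJ : ∀ i ∈ J, ∀ j ∈ J, ArcsMeet n k i.val j.val) :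
    Set.InjOn (fun j : ZMod n => arcOffset n k j.val) J := by
  intro i hi j hj hij
  have hi0 := hJ 0 h0 i hi
  have hj0 := hJ 0 h0 j hj
  have hij' := hJ i hi j hj
  have := i.val_lt; have := j.val_lt
  simp only [ArcsMeet, arcOffset, ZMod.val_zero] at hi0 hj0 hij' hij
  exact ZMod.val_injective n (by split_ifs at hij <;> omega)

lemma arcOffset_mem_range (h0 : 0 ∈ J) (hJ : ∀ i ∈ J, ∀ j ∈ J, ArcsMeet n k i.val j.val)
    {j : ZMod n} (hj : j ∈ J) : arcOffset n k j.val ∈ range k := by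
  have hj0 := hJ 0 h0 j hj
  have := j.val_lt
  simp only [ArcsMeet, arcOffset, ZMod.val_zero, mem_range] at hj0 ⊢
  split_ifs <;> omega

theorem card_le_of_arcsMeet (hkn : 2 * k ≤ n) (h0 : 0 ∈ J)
    (hJ : ∀ i ∈ J, ∀ j ∈ J, ArcsMeet n k i.val j.val) : #J ≤ k := by
  simpa using card_le_card_of_injOn _ (fun j hj => arcOffset_mem_range h0 hJ hj)
    (arcOffset_injOn hkn h0 hJ)

lemma natCast_mem_or_mem_of_card_eq (hkn : 2 * k ≤ n) (h0 : 0 ∈ J)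
    (hJ : ∀ i ∈ J, ∀ j ∈ J, ArcsMeet n k i.val j.val) (hcard : #J = k) {t : ℕ} (ht : t < k) :
    (t : ZMod n) ∈ J ∨ ((n - k + t : ℕ) : ZMod n) ∈ J := by
  have himage : J.image (fun j => arcOffset n k j.val) = range k :=
    eq_of_subset_of_card_le (fun _ hd => by
      obtain ⟨j, hj, rfl⟩ := mem_image.mp hd; exact arcOffset_mem_range h0 hJ hj)
      (by rw [card_range, card_image_of_injOn (arcOffset_injOn hkn h0 hJ), hcard])
  obtain ⟨j, hj, hjt⟩ := mem_image.mp (himage ▸ mem_range.mpr ht)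
  have hj0 := hJ 0 h0 j hj
  have := j.val_lt
  simp only [ArcsMeet, arcOffset, ZMod.val_zero] at hj0 hjt
  rw [← ZMod.natCast_zmod_val j] at hj
  split_ifs at hjt
  · exact .inl (hjt ▸ hj)
  · exact .inr (by rwa [show n - k + t = j.val by omega])

lemma natCast_mem_of_pred_mem (hkn : 2 * k < n) (h0 : 0 ∈ J)
    (hJ : ∀ i ∈ J, ∀ j ∈ J, ArcsMeet n k i.val j.val) (hcard : #J = k)
    (hlast : ((k - 1 : ℕ) : ZMod n) ∈ J) {t : ℕ} (ht : t < k) : (t : ZMod n) ∈ J := by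
  -- Downward induction: an arc starting at `n - k + t` cannot meet the one at `t + 1`.
  have key : ∀ m < k, ((k - 1 - m : ℕ) : ZMod n) ∈ J := by
    intro m hm
    induction m with
    | zero => simpa using hlast
    | succ m ih =>
      rcases natCast_mem_or_mem_of_card_eq hkn.le h0 hJ hcard (t := k - 1 - (m + 1)) (by omega)
        with h | h
      · exact h
      · have := hJ _ h _ (ih (by omega))
        rw [ZMod.val_natCast_of_lt (by omega), ZMod.val_natCast_of_lt (by omega)] at this
        simp only [ArcsMeet] at this
        omega
  simpa [show k - 1 - (k - 1 - t) = t by omega] using key (k - 1 - t) (by omega)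

lemma natCast_pred_mem_of_card_eq (hkn : 2 * k < n) (hk : 0 < k) (h0 : 0 ∈ J)
    (hJ : ∀ i ∈ J, ∀ j ∈ J, ArcsMeet n k i.val j.val) (hcard : #J = k)
    (hneg : ((n - 1 : ℕ) : ZMod n) ∉ J) : ((k - 1 : ℕ) : ZMod n) ∈ J := by
  have := natCast_mem_or_mem_of_card_eq hkn.le h0 hJ hcard (t := k - 1) (by omega)
  rwa [show n - k + (k - 1) = n - 1 by omega, or_iff_left hneg] at this

lemma exists_mem_sub_one_notMem (hJ : J.Nonempty) (hJ' : J ≠ univ) :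
    ∃ j ∈ J, j - 1 ∉ J := by
  by_contra! hclosed
  obtain ⟨j, hj⟩ := hJ
  have hsub : ∀ m : ℕ, j - m ∈ J := fun m => by
    induction m with
    | zero => simpa using hj
    | succ m ih => simpa [sub_sub] using hclosed _ ih
  exact hJ' (eq_univ_of_forall fun x => by simpa using hsub (j - x).val)

end Positions

/-- A cyclic order of `Fin n` is encoded as a bijection `f : ZMod n ≃ Fin n`; `arc k f j` is the set
of the `k` consecutive elements starting at position `j`. -/
def arc (k : ℕ) (f : ZMod n ≃ Fin n) (j : ZMod n) : Finset (Fin n) :=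
  (range k).image fun t : ℕ => f (j + t)

lemma mem_arc {f : ZMod n ≃ Fin n} {j : ZMod n} {x : Fin n} :
    x ∈ arc k f j ↔ ∃ t < k, f (j + t) = x := by
  simp [arc]

lemma card_arc (hkn : k ≤ n) (f : ZMod n ≃ Fin n) (j : ZMod n) : #(arc k f j) = k := by
  rw [arc, card_image_of_injOn, card_range]
  intro t ht s hs hts
  simp only [coe_range, Set.mem_Iio] at ht hs
  exact (ZMod.natCast_eq_natCast_iff_of_lt (by omega) (by omega)).mp
    (add_left_cancel (f.injective hts))

lemma arc_trans (f : ZMod n ≃ Fin n) (g : Equiv.Perm (Fin n)) (j : ZMod n) :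
    arc k (f.trans g) j = (arc k f j).image g := by
  simp [arc, image_image, Function.comp_def]

lemma arc_addLeft_trans (f : ZMod n ≃ Fin n) (i j : ZMod n) :
    arc k ((Equiv.addLeft i).trans f) j = arc k f (i + j) := by
  simp [arc, add_assoc]

lemma arcsMeet_of_not_disjoint [NeZero n] (hkn : k ≤ n) {f : ZMod n ≃ Fin n} {i j : ZMod n}
    (h : ¬ Disjoint (arc k f i) (arc k f j)) : ArcsMeet n k i.val j.val := by
  obtain ⟨x, hxi, hxj⟩ := not_disjoint_iff.mp h
  obtain ⟨t, ht, rfl⟩ := mem_arc.mp hxi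
  obtain ⟨s, hs, hts⟩ := mem_arc.mp hxj
  have h' := f.injective hts
  rw [← ZMod.natCast_zmod_val i, ← ZMod.natCast_zmod_val j, ← Nat.cast_add, ← Nat.cast_add,
    ZMod.natCast_eq_natCast_iff'] at h'
  exact arcsMeet_of_mod_eq i.val_lt j.val_lt ht hs hkn h'.symm

lemma arc_inter_arc_pred (hk : 0 < k) (hkn : 2 * k ≤ n + 1) (f : ZMod n ≃ Fin n) :
    arc k f 0 ∩ arc k f (k - 1 : ℕ) = {f (k - 1 : ℕ)} := by
  ext x
  simp only [mem_inter, mem_arc, zero_add, mem_singleton]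
  constructor
  · rintro ⟨⟨t, ht, rfl⟩, s, hs, hst⟩
    rw [← Nat.cast_add] at hst
    have := (ZMod.natCast_eq_natCast_iff_of_lt (by omega) (by omega)).mp (f.injective hst)
    rw [show t = k - 1 by omega]
  · rintro rfl
    exact ⟨⟨k - 1, by omega, rfl⟩, 0, by omega, by simp⟩

def arcStarts [NeZero n] (k : ℕ) (𝒜 : Finset (Finset (Fin n))) (f : ZMod n ≃ Fin n) :
    Finset (ZMod n) :=
  univ.filter fun j => arc k f j ∈ 𝒜

section Counting

variable [NeZero n] {𝒜 : Finset (Finset (Fin n))}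

lemma mem_arcStarts {f : ZMod n ≃ Fin n} {j : ZMod n} : j ∈ arcStarts k 𝒜 f ↔ arc k f j ∈ 𝒜 := by
  simp [arcStarts]

lemma arcsMeet_of_mem_arcStarts (hkn : k ≤ n) (h𝒜 : (𝒜 : Set (Finset (Fin n))).Intersecting)
    (f : ZMod n ≃ Fin n) :
    ∀ i ∈ arcStarts k 𝒜 f, ∀ j ∈ arcStarts k 𝒜 f, ArcsMeet n k i.val j.val :=
  fun _ hi _ hj => arcsMeet_of_not_disjoint hkn (h𝒜 (mem_arcStarts.mp hi) (mem_arcStarts.mp hj))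

lemma mem_arcStarts_addLeft_trans {f : ZMod n ≃ Fin n} {i j : ZMod n} :
    j ∈ arcStarts k 𝒜 ((Equiv.addLeft i).trans f) ↔ i + j ∈ arcStarts k 𝒜 f := by
  simp [mem_arcStarts, arc_addLeft_trans]

lemma card_arcStarts_addLeft_trans (f : ZMod n ≃ Fin n) (i : ZMod n) :
    #(arcStarts k 𝒜 ((Equiv.addLeft i).trans f)) = #(arcStarts k 𝒜 f) :=
  card_equiv (Equiv.addLeft i) fun _ => mem_arcStarts_addLeft_trans

theorem card_arcStarts_le (hkn : 2 * k ≤ n) (h𝒜 : (𝒜 : Set (Finset (Fin n))).Intersecting)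
    (f : ZMod n ≃ Fin n) : #(arcStarts k 𝒜 f) ≤ k := by
  obtain h | ⟨i, hi⟩ := (arcStarts k 𝒜 f).eq_empty_or_nonempty
  · simp [h]
  rw [← card_arcStarts_addLeft_trans f i]
  exact card_le_of_arcsMeet hkn (by rwa [mem_arcStarts_addLeft_trans, add_zero])
    (arcsMeet_of_mem_arcStarts (by omega) h𝒜 _)

lemma card_filter_arc_eq_le {A B : Finset (Fin n)} (hAB : #A = #B) :
    #{p : (ZMod n ≃ Fin n) × ZMod n | arc k p.1 p.2 = A} ≤
      #{p : (ZMod n ≃ Fin n) × ZMod n | arc k p.1 p.2 = B} := by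
  have := Set.powersetCard.isPretransitive (α := Fin n) (n := #A)
  obtain ⟨g, hg⟩ := MulAction.exists_smul_eq (Equiv.Perm (Fin n))
    (⟨A, rfl⟩ : Set.powersetCard (Fin n) #A) ⟨B, hAB.symm⟩
  have hgA : A.image g = B := by
    simpa [Set.powersetCard.coe_smul, Finset.smul_finset_def] using congrArg Subtype.val hg
  refine card_le_card_of_injOn (fun p => (p.1.trans g, p.2)) (fun p hp => ?_) fun p _ q _ hpq => ?_
  · simp only [coe_filter, mem_univ, true_and, Set.mem_ofPred_eq] at hp ⊢
    rw [arc_trans, hp, hgA]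
  · obtain ⟨h1, h2⟩ := Prod.mk.inj hpq
    exact Prod.ext (Equiv.ext fun x => g.injective (congrArg (· x) h1)) h2

lemma card_filter_arc_mem (h𝒜 : (𝒜 : Set (Finset (Fin n))).Sized k) {A : Finset (Fin n)}
    (hA : #A = k) :
    #{p : (ZMod n ≃ Fin n) × ZMod n | arc k p.1 p.2 ∈ 𝒜} =
      #𝒜 * #{p : (ZMod n ≃ Fin n) × ZMod n | arc k p.1 p.2 = A} := by
  rw [card_eq_sum_card_fiberwise (f := fun p => arc k p.1 p.2) (t := 𝒜)
    fun p hp => by simpa using hp, ← smul_eq_mul, ← sum_const]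
  refine sum_congr rfl fun B hB => ?_
  have hBA : #B = #A := (h𝒜 hB).trans hA.symm
  rw [filter_filter, filter_congr fun p _ => and_iff_right_of_imp fun h => h ▸ hB]
  exact le_antisymm (card_filter_arc_eq_le hBA) (card_filter_arc_eq_le hBA.symm)

theorem sum_card_arcStarts_mul_choose (hkn : k ≤ n) (h𝒜 : (𝒜 : Set (Finset (Fin n))).Sized k) :
    (∑ f, #(arcStarts k 𝒜 f)) * n.choose k = #𝒜 * (Fintype.card (ZMod n ≃ Fin n) * n) := by
  obtain ⟨A, -, hA⟩ := exists_subset_card_eq (s := (univ : Finset (Fin n))) (by simpa using hkn)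
  have hsum : ∑ f, #(arcStarts k 𝒜 f) = #{p : (ZMod n ≃ Fin n) × ZMod n | arc k p.1 p.2 ∈ 𝒜} := by
    simp only [arcStarts, card_filter, Fintype.sum_prod_type]
  have hall := card_filter_arc_mem (𝒜 := powersetCard k univ)
    (fun _ hB => (mem_powersetCard.mp hB).2) hA
  rw [filter_true_of_mem fun p _ => mem_powersetCard_univ.mpr (card_arc hkn p.1 p.2), card_univ,
    Fintype.card_prod, ZMod.card, card_powersetCard, card_univ, Fintype.card_fin] at hall
  rw [hsum, card_filter_arc_mem h𝒜 hA, hall]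
  ring

theorem card_arcStarts_eq (hk : 0 < k) (hkn : 2 * k ≤ n)
    (h𝒜 : (𝒜 : Set (Finset (Fin n))).Intersecting) (hsized : (𝒜 : Set (Finset (Fin n))).Sized k)
    (hcard : #𝒜 = (n - 1).choose (k - 1)) (f : ZMod n ≃ Fin n) : #(arcStarts k 𝒜 f) = k := by
  have hsum : ∑ f, #(arcStarts k 𝒜 f) = ∑ _f : ZMod n ≃ Fin n, k := by
    refine Nat.eq_of_mul_eq_mul_right (Nat.choose_pos (n := n) (k := k) (by omega)) ?_
    rw [sum_card_arcStarts_mul_choose (by omega) hsized, hcard, sum_const, card_univ, smul_eq_mul]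
    obtain ⟨n, rfl⟩ : ∃ m, n = m + 1 := ⟨n - 1, by omega⟩
    obtain ⟨k, rfl⟩ : ∃ m, k = m + 1 := ⟨k - 1, by omega⟩
    simp only [Nat.add_sub_cancel]
    linear_combination (Fintype.card (ZMod (n + 1) ≃ Fin (n + 1))) * Nat.add_one_mul_choose_eq n k
  exact (sum_eq_sum_iff_of_le fun f _ => card_arcStarts_le hkn h𝒜 f).mp hsum f (mem_univ f)

end Counting

lemma exists_arc_eq_of_list [NeZero n] (l : List (Fin n)) (hl : l.Nodup) (hmem : ∀ x, x ∈ l) :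
    ∃ f : ZMod n ≃ Fin n, ∀ L₁ L₂ L₃ : List (Fin n), l = L₁ ++ L₂ ++ L₃ →
      arc L₂.length f L₁.length = L₂.toFinset := by
  let e := hl.getEquivOfForallMemList l hmem
  have hlen : l.length = n := by simpa using Fintype.card_congr e
  let v : ZMod n ≃ Fin l.length :=
    { toFun j := ⟨j.val, by rw [hlen]; exact j.val_lt⟩
      invFun i := (i.val : ZMod n)
      left_inv j := by simp
      right_inv i := Fin.ext (ZMod.val_natCast_of_lt (i.isLt.trans_eq hlen)) }
  have hv : ∀ m (hm : m < l.length), v.trans e m = l[m] := fun m hm => by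
    simp [e, v, ZMod.val_natCast_of_lt (hlen ▸ hm)]
  refine ⟨v.trans e, ?_⟩
  rintro L₁ L₂ L₃ rfl
  ext x
  simp only [mem_arc, List.mem_toFinset, List.mem_iff_getElem, ← Nat.cast_add]
  refine exists_congr fun t => ⟨fun ⟨ht, hx⟩ => ⟨ht, ?_⟩, fun ⟨ht, hx⟩ => ⟨ht, ?_⟩⟩ <;>
  · rw [← hx, hv _ (by simp; omega)]
    simp [List.getElem_append_right, List.getElem_append_left ht]

lemma card_union_of_inter_eq_singleton {α : Type*} [DecidableEq α] {A B : Finset α} {z : α}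
    (hA : #A = k) (hB : #B = k) (hAB : A ∩ B = {z}) : #(A ∪ B) = 2 * k - 1 := by
  have := card_union_add_card_inter A B
  rw [hAB, hA, hB, card_singleton] at this
  omega

lemma card_erase_union_of_inter_eq_singleton {α : Type*} [DecidableEq α] {A B : Finset α} {z : α}
    (hA : #A = k) (hB : #B = k) (hAB : A ∩ B = {z}) : #((A ∪ B).erase z) = 2 * k - 2 := by
  rw [card_erase_of_mem (mem_union_left _ (mem_inter.mp (hAB ▸ mem_singleton_self z)).1),
    card_union_of_inter_eq_singleton hA hB hAB]
  omega

lemma choose_two_mul_sub_one_lt_choose (hk : 2 ≤ k) (hkn : 2 * k < n) :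
    (2 * k - 1).choose k < (n - 1).choose (k - 1) := by
  obtain ⟨m, rfl⟩ : ∃ m, k = m + 2 := ⟨k - 2, by omega⟩
  calc (2 * (m + 2) - 1).choose (m + 2) = (2 * (m + 1) + 1).choose (m + 1) := by
        rw [show 2 * (m + 2) - 1 = 2 * (m + 1) + 1 by omega, Nat.choose_symm_half]
    _ < (2 * (m + 1) + 1).choose m + (2 * (m + 1) + 1).choose (m + 1) :=
        Nat.lt_add_of_pos_left (Nat.choose_pos (by omega))
    _ = (2 * (m + 1) + 2).choose (m + 1) := (Nat.choose_succ_succ _ _).symm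
    _ ≤ (n - 1).choose (m + 2 - 1) := Nat.choose_le_choose _ (by omega)

section Maximal

variable [NeZero n] {𝒜 : Finset (Finset (Fin n))}

lemma arc_mem_of_arc_zero_mem_of_arc_pred_mem (hkn : 2 * k < n)
    (h𝒜 : (𝒜 : Set (Finset (Fin n))).Intersecting) (harcs : ∀ f, #(arcStarts k 𝒜 f) = k)
    {f : ZMod n ≃ Fin n} (h0 : arc k f 0 ∈ 𝒜) (hlast : arc k f (k - 1 : ℕ) ∈ 𝒜) {t : ℕ}
    (ht : t < k) : arc k f t ∈ 𝒜 :=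
  mem_arcStarts.mp <| natCast_mem_of_pred_mem hkn (mem_arcStarts.mpr h0)
    (arcsMeet_of_mem_arcStarts (by omega) h𝒜 f) (harcs f) (mem_arcStarts.mpr hlast) ht

theorem insert_mem_of_inter_eq_singleton (hkn : 2 * k < n)
    (h𝒜 : (𝒜 : Set (Finset (Fin n))).Intersecting) (hsized : (𝒜 : Set (Finset (Fin n))).Sized k)
    (harcs : ∀ f, #(arcStarts k 𝒜 f) = k) {A B : Finset (Fin n)} {z : Fin n} (hA : A ∈ 𝒜)
    (hB : B ∈ 𝒜) (hAB : A ∩ B = {z}) {W : Finset (Fin n)} (hW : W ⊆ (A ∪ B).erase z)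
    (hWcard : #W = k - 1) : insert z W ∈ 𝒜 := by
  have hzAB : z ∈ A ∧ z ∈ B := mem_inter.mp (hAB ▸ mem_singleton_self z)
  have hAB' : ∀ x ∈ A, x ∈ B → x = z := fun x hxA hxB =>
    mem_singleton.mp (hAB ▸ mem_inter_of_mem hxA hxB)
  have hW' : ∀ x ∈ W, x ≠ z ∧ (x ∈ A ∨ x ∈ B) := fun x hx => by simpa using hW hx
  -- Listed in this cyclic order, `A`, `insert z W` and `B` are the arcs at positions `0`,
  -- `#(A \ insert z W)` and `k - 1`, and the arcs between the first and the last are members.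
  let A₀ := (A \ insert z W).toList
  let S := (W ∩ A).toList
  let T := (W \ A).toList
  let B₀ := (B \ insert z W).toList
  let R := (A ∪ B)ᶜ.toList
  let l := A₀ ++ S ++ [z] ++ T ++ B₀ ++ R
  have hl : l.Nodup := by
    simp only [l, A₀, S, T, B₀, R, List.nodup_append, nodup_toList, List.nodup_cons,
      List.not_mem_nil, List.nodup_nil, mem_toList, List.mem_append, List.mem_singleton, mem_sdiff,
      mem_insert, mem_inter, mem_compl, mem_union]
    grind
  have hmem : ∀ x, x ∈ l := fun x => by
    simp only [l, A₀, S, T, B₀, R, mem_toList, List.mem_append, List.mem_singleton, mem_sdiff,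
      mem_insert, mem_inter, mem_compl, mem_union]
    grind
  obtain ⟨f, hf⟩ := exists_arc_eq_of_list l hl hmem
  have harc : ∀ L₁ L₂ L₃, l = L₁ ++ L₂ ++ L₃ → ∀ C : Finset (Fin n), L₂.toFinset = C → #C = k →
      L₂.length = k ∧ arc k f L₁.length = C := by
    rintro L₁ L₂ L₃ hL C rfl hC
    have hL₂ : L₂.length = k := (List.toFinset_card_of_nodup
      (hl.sublist (hL ▸ List.infix_append L₁ L₂ L₃).sublist)).symm.trans hC
    exact ⟨hL₂, hL₂ ▸ hf L₁ L₂ L₃ hL⟩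
  have hzW : z ∉ W := fun h => (hW' z h).1 rfl
  have hk : 0 < k := hsized hA ▸ card_pos.mpr ⟨z, hzAB.1⟩
  obtain ⟨hlenA, h0⟩ := harc [] (A₀ ++ S ++ [z]) (T ++ B₀ ++ R) (by simp [l]) A
    (by ext x; simp [A₀, S]; grind) (hsized hA)
  obtain ⟨-, hlast⟩ := harc (A₀ ++ S) ([z] ++ T ++ B₀) R (by simp [l]) B
    (by ext x; simp [T, B₀]; grind) (hsized hB)
  obtain ⟨-, hmid⟩ := harc A₀ (S ++ [z] ++ T) (B₀ ++ R) (by simp [l]) (insert z W)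
    (by ext x; simp [S, T]; grind) (by rw [card_insert_of_notMem hzW]; omega)
  simp only [List.length_append, List.length_nil, List.length_singleton, Nat.cast_zero] at hlenA h0
  rw [show (A₀ ++ S).length = k - 1 by simp only [List.length_append]; omega] at hlast
  rw [← hmid]
  exact arc_mem_of_arc_zero_mem_of_arc_pred_mem hkn h𝒜 harcs (h0 ▸ hA) (hlast ▸ hB) (by omega)

theorem subset_erase_of_inter_eq_singleton (hkn : 2 * k < n)
    (h𝒜 : (𝒜 : Set (Finset (Fin n))).Intersecting) (hsized : (𝒜 : Set (Finset (Fin n))).Sized k)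
    (harcs : ∀ f, #(arcStarts k 𝒜 f) = k) {A B : Finset (Fin n)} {z : Fin n} (hA : A ∈ 𝒜)
    (hB : B ∈ 𝒜) (hAB : A ∩ B = {z}) {D : Finset (Fin n)} (hD : D ∈ 𝒜) (hzD : z ∉ D) :
    D ⊆ (A ∪ B).erase z := by
  set U := (A ∪ B).erase z
  have hU : #U = 2 * k - 2 := card_erase_union_of_inter_eq_singleton (hsized hA) (hsized hB) hAB
  -- Otherwise some `insert z W` with `W ⊆ U \ D` would be a member disjoint from `D`.
  have hUD : #(U \ D) < k - 1 := by
    by_contra! h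
    obtain ⟨W, hWUD, hW⟩ := exists_subset_card_eq h
    refine h𝒜 hD (insert_mem_of_inter_eq_singleton hkn h𝒜 hsized harcs hA hB hAB
      (hWUD.trans sdiff_subset) hW) (disjoint_insert_right.mpr ⟨hzD, ?_⟩)
    exact disjoint_of_subset_right hWUD disjoint_sdiff
  have hUD' := card_sdiff_add_card_inter U D
  have hD' : U ∩ D = D :=
    eq_of_subset_of_card_le inter_subset_right (by rw [hsized hD]; omega)
  exact hD' ▸ inter_subset_left

lemma exists_inter_eq_singleton (hk : 0 < k) (hkn : 2 * k < n)
    (h𝒜 : (𝒜 : Set (Finset (Fin n))).Intersecting) (harcs : ∀ f, #(arcStarts k 𝒜 f) = k) :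
    ∃ A ∈ 𝒜, ∃ B ∈ 𝒜, ∃ z, A ∩ B = {z} := by
  let f₀ : ZMod n ≃ Fin n := Fintype.equivOfCardEq (by simp)
  have hne : (arcStarts k 𝒜 f₀).Nonempty := card_pos.mp (by rw [harcs f₀]; exact hk)
  have hne' : arcStarts k 𝒜 f₀ ≠ univ := fun h => by
    have := harcs f₀
    rw [h, card_univ, ZMod.card] at this
    omega
  obtain ⟨j, hj, hj'⟩ := exists_mem_sub_one_notMem hne hne'
  -- Rotate to a start of an arc in `𝒜` not preceded by one; the arc starting `k - 1` positions
  -- later is then in `𝒜` as well, and it meets the first one in a single point.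
  let f := (Equiv.addLeft j).trans f₀
  have h0 : 0 ∈ arcStarts k 𝒜 f := by rwa [mem_arcStarts_addLeft_trans, add_zero]
  have hneg : ((n - 1 : ℕ) : ZMod n) ∉ arcStarts k 𝒜 f := by
    rwa [mem_arcStarts_addLeft_trans, Nat.cast_sub NeZero.one_le, ZMod.natCast_self, Nat.cast_one,
      zero_sub, ← sub_eq_add_neg]
  have hlast := natCast_pred_mem_of_card_eq hkn hk h0 (arcsMeet_of_mem_arcStarts (by omega) h𝒜 f)
    (harcs f) hneg
  exact ⟨_, mem_arcStarts.mp h0, _, mem_arcStarts.mp hlast, _, arc_inter_arc_pred hk (by omega) f⟩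

lemma subset_union_of_inter_eq_singleton (hkn : 2 * k < n)
    (h𝒜 : (𝒜 : Set (Finset (Fin n))).Intersecting) (hsized : (𝒜 : Set (Finset (Fin n))).Sized k)
    (harcs : ∀ f, #(arcStarts k 𝒜 f) = k) {A B : Finset (Fin n)} {z : Fin n} (hA : A ∈ 𝒜)
    (hB : B ∈ 𝒜) (hAB : A ∩ B = {z}) {D : Finset (Fin n)} (hD : D ∈ 𝒜) (hzD : z ∉ D)
    {C : Finset (Fin n)} (hC : C ∈ 𝒜) : C ⊆ A ∪ B := by
  set U := (A ∪ B).erase z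
  have hDU : D ⊆ U := subset_erase_of_inter_eq_singleton hkn h𝒜 hsized harcs hA hB hAB hD hzD
  have hzU : insert z U ⊆ A ∪ B := insert_subset
    (mem_union_left _ (mem_inter.mp (hAB ▸ mem_singleton_self z)).1) (erase_subset _ _)
  by_cases hDC : D ⊆ C
  · rw [← eq_of_subset_of_card_le hDC (by rw [hsized hC, hsized hD])]
    exact hDU.trans (erase_subset _ _)
  obtain ⟨y, hyD, hyC⟩ := not_subset.mp hDC
  -- The member `E` below meets `D` exactly in `y`, so `(D, E)` is a new pair of anchors.
  have hU : #U = 2 * k - 2 := card_erase_union_of_inter_eq_singleton (hsized hA) (hsized hB) hAB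
  have hDk := card_le_card hDU
  have hDpos := card_pos.mpr ⟨y, hyD⟩
  rw [hU, hsized hD] at hDk
  rw [hsized hD] at hDpos
  set E := insert z (insert y (U \ D))
  have hE : E ∈ 𝒜 := by
    refine insert_mem_of_inter_eq_singleton hkn h𝒜 hsized harcs hA hB hAB
      (insert_subset (hDU hyD) sdiff_subset) ?_
    rw [card_insert_of_notMem fun h => (mem_sdiff.mp h).2 hyD, card_sdiff_of_subset hDU, hU,
      hsized hD]
    omega
  have hDE : D ∩ E = {y} := by
    ext x
    simp only [E, mem_inter, mem_insert, mem_sdiff, mem_singleton]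
    grind
  refine (subset_erase_of_inter_eq_singleton hkn h𝒜 hsized harcs hD hE hDE hC hyC).trans ?_
  exact (erase_subset _ _).trans (union_subset (hDU.trans (erase_subset _ _))
    ((insert_subset_insert z (insert_subset (hDU hyD) sdiff_subset)).trans hzU))

theorem exists_forall_mem_of_card_arcStarts_eq (hk : 0 < k) (hkn : 2 * k < n)
    (h𝒜 : (𝒜 : Set (Finset (Fin n))).Intersecting) (hsized : (𝒜 : Set (Finset (Fin n))).Sized k)
    (hcard : #𝒜 = (n - 1).choose (k - 1)) (harcs : ∀ f, #(arcStarts k 𝒜 f) = k) :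
    ∃ z, ∀ A ∈ 𝒜, z ∈ A := by
  obtain ⟨A, hA, B, hB, z, hAB⟩ := exists_inter_eq_singleton hk hkn h𝒜 harcs
  refine ⟨z, fun D hD => ?_⟩
  by_contra hzD
  have hk2 : 2 ≤ k := by
    have := card_le_card (subset_erase_of_inter_eq_singleton hkn h𝒜 hsized harcs hA hB hAB hD hzD)
    rw [hsized hD, card_erase_union_of_inter_eq_singleton (hsized hA) (hsized hB) hAB] at this
    omega
  have hle : #𝒜 ≤ #(powersetCard k (A ∪ B)) := card_le_card fun C hC => mem_powersetCard.mpr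
    ⟨subset_union_of_inter_eq_singleton hkn h𝒜 hsized harcs hA hB hAB hD hzD hC, hsized hC⟩
  rw [card_powersetCard, card_union_of_inter_eq_singleton (hsized hA) (hsized hB) hAB, hcard] at hle
  exact (choose_two_mul_sub_one_lt_choose hk2 hkn).not_ge hle

end Maximal

theorem erdos_ko_rado_eq_star {𝒜 : Finset (Finset (Fin n))} (hk : 0 < k) (hkn : 2 * k < n)
    (h𝒜 : (𝒜 : Set (Finset (Fin n))).Intersecting) (hsized : (𝒜 : Set (Finset (Fin n))).Sized k)
    (hcard : #𝒜 = (n - 1).choose (k - 1)) :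
    ∃ z, 𝒜 = {A ∈ powersetCard k (univ : Finset (Fin n)) | z ∈ A} := by
  have : NeZero n := ⟨by omega⟩
  obtain ⟨z, hz⟩ := exists_forall_mem_of_card_arcStarts_eq hk hkn h𝒜 hsized hcard
    (card_arcStarts_eq hk hkn.le h𝒜 hsized hcard)
  refine ⟨z, eq_of_subset_of_card_le (fun A hA => by simp [hsized hA, hz A hA]) ?_⟩
  rw [hcard]
  -- A star is itself intersecting, so the Erdős–Ko–Rado bound applies to it.
  refine erdos_ko_rado (fun A hA B hB => ?_) (fun A hA => ?_) (by omega)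
  · simp only [coe_filter, mem_powersetCard_univ, Set.mem_ofPred_eq] at hA hB
    exact not_disjoint_iff.mpr ⟨z, hA.2, hB.2⟩
  · simp only [coe_filter, mem_powersetCard_univ, Set.mem_ofPred_eq] at hA
    exact hA.1

theorem Function.bijective_of_card_preimage_eq {α : Type*} [Fintype α] [DecidableEq α]
    {σ : α → α} (hk : 0 < k) (hkα : k < Fintype.card α)
    (hσ : ∀ s : Finset α, #s = k → #{i | σ i ∈ s} = k) : σ.Bijective := by
  let c : α → ℕ := fun x => #{i | σ i = x}
  have hsum : ∀ s : Finset α, ∑ x ∈ s, c x = #{i | σ i ∈ s} :=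
    fun s => sum_card_fiberwise_eq_card_filter univ s σ
  -- Exchanging one element of a `k`-set does not change the size of its preimage.
  have hc : ∀ x y, c x = c y := fun x y => by
    obtain rfl | hxy := eq_or_ne x y
    · rfl
    obtain ⟨W, hW, hWcard⟩ := exists_subset_card_eq (s := (univ.erase x).erase y) (n := k - 1)
      (by rw [card_erase_of_mem (mem_erase.mpr ⟨hxy.symm, mem_univ y⟩), card_erase_of_mem
        (mem_univ x), card_univ]; omega)
    have hxW : x ∉ W := fun h => by simpa using hW h
    have hyW : y ∉ W := fun h => by simpa using hW h
    have hx := hσ (insert x W) (by rw [card_insert_of_notMem hxW]; omega)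
    have hy := hσ (insert y W) (by rw [card_insert_of_notMem hyW]; omega)
    rw [← hsum, sum_insert hxW] at hx
    rw [← hsum, sum_insert hyW] at hy
    omega
  have hone : ∀ x, c x = 1 := fun x => by
    have h := hsum univ
    simp only [mem_univ, filter_true, card_univ, sum_congr rfl fun y _ => hc y x, sum_const,
      smul_eq_mul] at h
    exact (Nat.mul_eq_left (by omega)).mp h
  refine Finite.surjective_iff_bijective.mp fun x => ?_
  obtain ⟨i, hi⟩ := card_pos.mp (hone x ▸ one_pos : 0 < c x)
  exact ⟨i, (mem_filter.mp hi).2⟩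

abbrev kneserGraph (n k : ℕ) : SimpleGraph {s : Finset (Fin n) // #s = k} :=
  SimpleGraph.fromRel fun s t => Disjoint s.1 t.1

lemma kneserGraph_adj (hk : k ≠ 0) {s t : {s : Finset (Fin n) // #s = k}} :
    (kneserGraph n k).Adj s t ↔ Disjoint s.1 t.1 := by
  rw [SimpleGraph.fromRel_adj]
  refine ⟨fun h => h.2.elim id fun h => h.symm, fun h => ⟨fun hst => hk ?_, .inl h⟩⟩
  subst hst
  rw [← s.2, disjoint_self.mp h, bot_eq_empty, card_empty]

def kneserGraphIsoOfPerm (π : Equiv.Perm (Fin n)) : kneserGraph n k ≃g kneserGraph n k where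
  toEquiv := π.finsetCongr.subtypeEquiv fun s => by simp
  map_rel_iff' := by
    intro s t
    simp [SimpleGraph.fromRel_adj, disjoint_map, Subtype.ext_iff]

section Endomorphism

variable (φ : kneserGraph n k →g kneserGraph n k)

def starPreimage (i : Fin n) : Finset (Finset (Fin n)) :=
  (univ.filter fun v => i ∈ (φ v).1).map (Function.Embedding.subtype _)

lemma mem_starPreimage {i : Fin n} {A : Finset (Fin n)} :
    A ∈ starPreimage φ i ↔ ∃ hA : #A = k, i ∈ (φ ⟨A, hA⟩).1 := by
  simp [starPreimage]

lemma starPreimage_intersecting (hk : k ≠ 0) (i : Fin n) :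
    (starPreimage φ i : Set (Finset (Fin n))).Intersecting := by
  intro A hA B hB hAB
  obtain ⟨hA, hiA⟩ := (mem_starPreimage φ).mp hA
  obtain ⟨hB, hiB⟩ := (mem_starPreimage φ).mp hB
  have := φ.map_adj ((kneserGraph_adj hk (s := ⟨A, hA⟩) (t := ⟨B, hB⟩)).mpr hAB)
  exact disjoint_left.mp ((kneserGraph_adj hk).mp this) hiA hiB

lemma starPreimage_sized (i : Fin n) : (starPreimage φ i : Set (Finset (Fin n))).Sized k :=
  fun _ hA => ((mem_starPreimage φ).mp hA).1

lemma sum_card_starPreimage : ∑ i, #(starPreimage φ i) = n.choose k * k := by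
  simp only [starPreimage, card_map, card_filter]
  rw [sum_comm]
  simp [(φ _).2, Fintype.card_finset_len]

lemma card_starPreimage (hk : 0 < k) (hkn : 2 * k < n) (i : Fin n) :
    #(starPreimage φ i) = (n - 1).choose (k - 1) := by
  have hle : ∀ i ∈ univ, #(starPreimage φ i) ≤ (n - 1).choose (k - 1) := fun i _ =>
    erdos_ko_rado (starPreimage_intersecting φ hk.ne' i) (starPreimage_sized φ i) (by omega)
  refine (sum_eq_sum_iff_of_le hle).mp ?_ i (mem_univ i)
  rw [sum_card_starPreimage, sum_const, card_univ, Fintype.card_fin, smul_eq_mul]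
  obtain ⟨n, rfl⟩ : ∃ m, n = m + 1 := ⟨n - 1, by omega⟩
  obtain ⟨k, rfl⟩ : ∃ m, k = m + 1 := ⟨k - 1, by omega⟩
  simpa using (Nat.add_one_mul_choose_eq n k).symm

theorem exists_perm_map_eq (hk : 0 < k) (hkn : 2 * k < n) :
    ∃ π : Equiv.Perm (Fin n), ∀ v, (φ v).1 = v.1.map π.toEmbedding := by
  choose σ hσ using fun i => erdos_ko_rado_eq_star hk hkn (starPreimage_intersecting φ hk.ne' i)
    (starPreimage_sized φ i) (card_starPreimage φ hk hkn i)
  have hmem : ∀ v i, i ∈ (φ v).1 ↔ σ i ∈ v.1 := fun v i => by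
    simpa [mem_starPreimage, v.2] using congrArg (v.1 ∈ ·) (hσ i)
  have hσ : σ.Bijective := Function.bijective_of_card_preimage_eq hk (by simp; omega)
    fun s hs => by
      rw [← (φ ⟨s, hs⟩).2]
      exact congrArg card (ext fun i => by simp [hmem])
  refine ⟨(Equiv.ofBijective σ hσ).symm, fun v => ext fun i => ?_⟩
  rw [mem_map_equiv, hmem]
  simp

end Endomorphism

/-- For `a > 2b`, every homomorphism of the Kneser graph
`KG_{a,b}` to itself is an automorphism. -/
theorem kneser_hom_is_automorphism (a b : ℕ) (hb : 0 < b) (hab : 2 * b < a)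
    (φ : SimpleGraph.fromRel
          (fun s t : {S : Finset (Fin a) // S.card = b} => Disjoint s.1 t.1) →g
        SimpleGraph.fromRel
          (fun s t : {S : Finset (Fin a) // S.card = b} => Disjoint s.1 t.1)) :
    ∃ e : SimpleGraph.fromRel
            (fun s t : {S : Finset (Fin a) // S.card = b} => Disjoint s.1 t.1) ≃g
          SimpleGraph.fromRel
            (fun s t : {S : Finset (Fin a) // S.card = b} => Disjoint s.1 t.1),
      ∀ v, e v = φ v := by
  obtain ⟨π, hπ⟩ := exists_perm_map_eq φ hb hab
  exact ⟨kneserGraphIsoOfPerm π, fun v => Subtype.ext (hπ v).symm⟩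
end

section
/- In the construction of the previous statement: if α' is an ((a+b):b)-coloring of G' that restricts to the identity on V(K) = binom([a+b], b), then for every v ∈ V(G), the set α'(v) is a b-element subset of L(v). In particular α' restricted to V(G) is an L-(a:b)-coloring of G. -/
/-- If an ((a+b):b)-coloring of `G'` restricts to the identity on
the Kneser part, then on `V(G)` it is an `L`-(a:b)-coloring. -/
theorem aug_coloring_identity_restricts {V : Type} (G : SimpleGraph V) (a b : ℕ)
    (ha : 0 < a) (hb : 0 < b) (L : V → Finset (Fin a))
    (α' : (V ⊕ {S : Finset (Fin (a + b)) // S.card = b}) → Finset (Fin (a + b)))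
    (hcard : ∀ w, (α' w).card = b)
    (hadj : ∀ w w',
      (SimpleGraph.fromRel (fun p q =>
        match p, q with
        | Sum.inl u, Sum.inl v => G.Adj u v
        | Sum.inr X, Sum.inr Y => Disjoint X.1 Y.1
        | Sum.inl v, Sum.inr X => Disjoint ((L v).image (Fin.castAdd b)) X.1
        | Sum.inr _, Sum.inl _ => False)).Adj w w' →
      Disjoint (α' w) (α' w'))
    (hid : ∀ X : {S : Finset (Fin (a + b)) // S.card = b}, α' (Sum.inr X) = X.1) :
    (∀ v : V, α' (Sum.inl v) ⊆ (L v).image (Fin.castAdd b)) ∧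
    (∀ u v, G.Adj u v → Disjoint (α' (Sum.inl u)) (α' (Sum.inl v))) := by
  constructor
  · intro v γ hγ
    by_contra hγn
    -- γ is in the complement of the image of L v
    set I : Finset (Fin (a + b)) := (L v).image (Fin.castAdd b) with hI
    have hIcard : I.card ≤ a := by
      calc I.card ≤ (L v).card := Finset.card_image_le
        _ ≤ (Finset.univ : Finset (Fin a)).card := Finset.card_le_univ _
        _ = a := by simp
    have hγc : γ ∈ Iᶜ := by simpa using hγn
    have hccard : b ≤ Iᶜ.card := by
      have : Iᶜ.card = (a + b) - I.card := by
        simp [Finset.card_compl]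
      omega
    -- choose T ⊆ Iᶜ.erase γ with card b - 1
    have hecard : b - 1 ≤ (Iᶜ.erase γ).card := by
      rw [Finset.card_erase_of_mem hγc]
      omega
    obtain ⟨T, hT, hTcard⟩ := Finset.exists_subset_card_eq hecard
    have hγT : γ ∉ T := fun h => Finset.notMem_erase γ _ (hT h)
    set X : Finset (Fin (a + b)) := insert γ T with hXdef
    have hXcard : X.card = b := by
      rw [Finset.card_insert_of_notMem hγT, hTcard]
      omega
    have hXsub : X ⊆ Iᶜ := by
      intro x hx
      rcases Finset.mem_insert.mp hx with h | h
      · subst h; exact hγc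
      · exact Finset.erase_subset _ _ (hT h)
    have hXdisj : Disjoint I X := by
      rw [Finset.disjoint_right]
      intro x hx
      simpa using hXsub hx
    have hd := hadj (Sum.inl v) (Sum.inr ⟨X, hXcard⟩) ⟨by simp, Or.inl hXdisj⟩
    rw [hid ⟨X, hXcard⟩] at hd
    exact Finset.disjoint_left.mp hd hγ (Finset.mem_insert_self γ T)
  · intro u v huv
    exact hadj _ _ ⟨by simp [huv.ne], Or.inl huv⟩
end

section
/- Let G be a graph with a proper t-coloring c : V(G) → [t], and let (G, L, β) be an instance of nonuniform list coloring with lists L(v) ⊆ [a] and demands β(v) ≤ b. Define L'(v) = L(v) ∪ F(v), where F(v) = {a + c(v)·b + i : 0 ≤ i < b − β(v)}. Then G has an L-(a:β)-coloring (each v receives exactly β(v) colors from L(v), disjoint on edges) if and only if G has an L'-((a+tb):b)-coloring (each v receives exactly b colors from L'(v), disjoint on edges). -/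
/-- nonuniform list coloring with demands `β` is equivalent to
uniform list coloring with the lists extended by filling colors. -/
theorem nonuniform_iff_uniform_list_coloring {V : Type} (G : SimpleGraph V)
    (a b t : ℕ) (L : V → Finset ℕ) (hL : ∀ v, L v ⊆ Finset.range a)
    (β : V → ℕ) (hβ1 : ∀ v, 1 ≤ β v) (hβ : ∀ v, β v ≤ b)
    (c : V → ℕ) (hct : ∀ v, c v < t) (hc : ∀ u v, G.Adj u v → c u ≠ c v) :
    (∃ α : V → Finset ℕ,
        (∀ v, α v ⊆ L v ∧ (α v).card = β v) ∧
        ∀ u v, G.Adj u v → Disjoint (α u) (α v)) ↔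
    (∃ α' : V → Finset ℕ,
        (∀ v, α' v ⊆ L v ∪ (Finset.range (b - β v)).image (fun i => a + c v * b + i) ∧
          (α' v).card = b) ∧
        ∀ u v, G.Adj u v → Disjoint (α' u) (α' v)) := by
  set F : V → Finset ℕ := fun v => (Finset.range (b - β v)).image (fun i => a + c v * b + i)
    with hF
  have hFmem : ∀ v x, x ∈ F v ↔ ∃ i, i < b - β v ∧ x = a + c v * b + i := by
    intro v x
    simp [hF, eq_comm]
  have hFcard : ∀ v, (F v).card = b - β v := by
    intro v
    rw [hF]
    rw [Finset.card_image_of_injective _ (fun i j h => Nat.add_left_cancel h)]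
    simp
  have hdisLF : ∀ u v, Disjoint (L u) (F v) := by
    intro u v
    rw [Finset.disjoint_left]
    intro x hx hx'
    have h1 := hL u hx
    simp only [Finset.mem_range] at h1
    obtain ⟨i, _, rfl⟩ := (hFmem v x).1 hx'
    omega
  have hdisFF : ∀ u v, c u ≠ c v → Disjoint (F u) (F v) := by
    intro u v hne
    rw [Finset.disjoint_left]
    intro x hx hx'
    obtain ⟨i, hi, rfl⟩ := (hFmem u x).1 hx
    obtain ⟨j, hj, he⟩ := (hFmem v _).1 hx'
    have hi' : i < b := by omega
    have hj' : j < b := by omega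
    rcases Nat.lt_or_ge (c u) (c v) with h | h
    · have : (c u + 1) * b ≤ c v * b := Nat.mul_le_mul_right b h
      nlinarith
    · have h' : c v < c u := lt_of_le_of_ne h (Ne.symm hne)
      have : (c v + 1) * b ≤ c u * b := Nat.mul_le_mul_right b h'
      nlinarith
  constructor
  · rintro ⟨α, hα, hαd⟩
    refine ⟨fun v => α v ∪ F v, fun v => ⟨Finset.union_subset_union (hα v).1 le_rfl, ?_⟩, ?_⟩
    · rw [Finset.card_union_of_disjoint
        ((hdisLF v v).mono_left (hα v).1), (hα v).2, hFcard]
      have := hβ v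
      omega
    · intro u v huv
      have h1 := hαd u v huv
      have h2 := hdisFF u v (hc u v huv)
      have h3 := (hdisLF u v).mono_left (hα u).1
      have h4 := ((hdisLF v u).mono_left (hα v).1).symm
      simp only [Finset.disjoint_union_left, Finset.disjoint_union_right]
      exact ⟨⟨h1, h4⟩, ⟨h3, h2⟩⟩
  · rintro ⟨α', hα', hα'd⟩
    have hcard : ∀ v, β v ≤ (α' v ∩ L v).card := by
      intro v
      have hsub : α' v \ L v ⊆ F v := by
        intro x hx
        rw [Finset.mem_sdiff] at hx
        rcases Finset.mem_union.1 ((hα' v).1 hx.1) with h | h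
        · exact absurd h hx.2
        · exact h
      have h1 : (α' v \ L v).card ≤ b - β v := by
        calc (α' v \ L v).card ≤ (F v).card := Finset.card_le_card hsub
        _ = b - β v := hFcard v
      have h2 : (α' v ∩ L v).card + (α' v \ L v).card = (α' v).card :=
        Finset.card_inter_add_card_sdiff _ _
      have h3 := (hα' v).2
      have := hβ v
      omega
    choose α hαs hαc using fun v => Finset.exists_subset_card_eq (hcard v)
    refine ⟨α, fun v => ⟨(hαs v).trans (Finset.inter_subset_right), hαc v⟩, ?_⟩
    intro u v huv
    exact (hα'd u v huv).mono ((hαs u).trans Finset.inter_subset_left)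
      ((hαs v).trans Finset.inter_subset_left)
end

section
/- Let n, t be positive integers with t | n, q = n/t, r = 10^q − 1, and let s, a₁, ..., aₙ be n-digit decimal numbers with ∑_{i=1}^n a_i^{(j)} < 10 for every digit position j. For x an n-digit number and 1 ≤ j ≤ t, let x^{[j]} be the number formed by the j-th block of q consecutive decimal digits of x. Then there exists S ⊆ {1,...,n} with ∑_{i∈S} a_i = s if and only if there exists S ⊆ {1,...,n} with ∑_{i∈S} a_i^{[j]} = s^{[j]} for every j ∈ {1,...,t}. -/
/-!
If no carries occur when adding the `a i` digit by digit, then the sum over any subset is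
computed digit by digit, hence block by block: the `j`-th block of `∑ i ∈ S, a i` is
`∑ i ∈ S, a i^{[j]}`. A number below `10 ^ (t * q)` is determined by its `t` blocks, which are
its digits in base `10 ^ q`, and the subset sums stay below `10 ^ n` because nothing carries.
-/

open Finset

def CarryFree {ι : Type*} (b : ℕ) (S : Finset ι) (x : ι → ℕ) : Prop :=
  ∀ j, ∑ i ∈ S, x i / b ^ j % b < b

namespace CarryFree

variable {ι : Type*} {b : ℕ} {S : Finset ι} {x : ι → ℕ}

theorem mono {T : Finset ι} (h : CarryFree b S x) (hT : T ⊆ S) : CarryFree b T x :=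
  fun j => (sum_le_sum_of_subset hT).trans_lt (h j)

theorem div_pow (h : CarryFree b S x) (k : ℕ) : CarryFree b S (fun i => x i / b ^ k) := by
  intro j
  simpa only [Nat.div_div_eq_div_mul, ← pow_add] using h (k + j)

theorem sum_mod_pow_lt (h : CarryFree b S x) (k : ℕ) : ∑ i ∈ S, x i % b ^ k < b ^ k := by
  induction k with
  | zero => simp [Nat.mod_one]
  | succ k ih =>
    calc ∑ i ∈ S, x i % b ^ (k + 1)
        = ∑ i ∈ S, x i % b ^ k + b ^ k * ∑ i ∈ S, x i / b ^ k % b := by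
          simp only [Nat.mod_pow_succ, sum_add_distrib, mul_sum]
      _ < b ^ k * (∑ i ∈ S, x i / b ^ k % b + 1) := by rw [mul_add_one]; omega
      _ ≤ b ^ k * b := Nat.mul_le_mul_left _ (h k)
      _ = b ^ (k + 1) := (pow_succ b k).symm

theorem sum_mod_pow (h : CarryFree b S x) (k : ℕ) :
    (∑ i ∈ S, x i) % b ^ k = ∑ i ∈ S, x i % b ^ k := by
  rw [sum_nat_mod, Nat.mod_eq_of_lt (h.sum_mod_pow_lt k)]

theorem sum_div_pow (h : CarryFree b S x) (k : ℕ) :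
    (∑ i ∈ S, x i) / b ^ k = ∑ i ∈ S, x i / b ^ k := by
  have hb : 0 < b ^ k := pow_pos ((Nat.zero_le _).trans_lt (h 0)) k
  have hsplit : ∑ i ∈ S, x i = b ^ k * ∑ i ∈ S, x i / b ^ k + ∑ i ∈ S, x i % b ^ k := by
    rw [mul_sum, ← sum_add_distrib]
    exact sum_congr rfl fun i _ => (Nat.div_add_mod _ _).symm
  rw [hsplit, Nat.mul_add_div hb, Nat.div_eq_of_lt (h.sum_mod_pow_lt k), add_zero]

theorem sum_div_pow_mod_pow (h : CarryFree b S x) (k q : ℕ) :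
    (∑ i ∈ S, x i) / b ^ k % b ^ q = ∑ i ∈ S, x i / b ^ k % b ^ q := by
  rw [h.sum_div_pow k, (h.div_pow k).sum_mod_pow q]

theorem sum_lt_pow {n : ℕ} (h : CarryFree b S x) (hx : ∀ i ∈ S, x i < b ^ n) :
    ∑ i ∈ S, x i < b ^ n := by
  rw [← sum_congr rfl fun i hi => Nat.mod_eq_of_lt (hx i hi)]
  exact h.sum_mod_pow_lt n

end CarryFree

theorem Nat.mod_pow_eq_of_digits_eq {c N M k : ℕ}
    (h : ∀ j < k, N / c ^ j % c = M / c ^ j % c) : N % c ^ k = M % c ^ k := by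
  induction k with
  | zero => simp [Nat.mod_one]
  | succ k ih =>
    rw [Nat.mod_pow_succ, Nat.mod_pow_succ, ih fun j hj => h j (by omega), h k (by omega)]

theorem Nat.eq_of_digits_eq {c N M k : ℕ} (hN : N < c ^ k) (hM : M < c ^ k)
    (h : ∀ j < k, N / c ^ j % c = M / c ^ j % c) : N = M := by
  simpa only [Nat.mod_eq_of_lt hN, Nat.mod_eq_of_lt hM] using Nat.mod_pow_eq_of_digits_eq h

theorem carryless_subset_sum_blocks_general (n t q : ℕ)
    (hn : n = t * q) (s : ℕ) (a : Fin n → ℕ)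
    (hs : s < 10 ^ n) (ha : ∀ i, a i < 10 ^ n)
    (hcf : ∀ j, ∑ i : Fin n, a i / 10 ^ j % 10 < 10) :
    (∃ S : Finset (Fin n), ∑ i ∈ S, a i = s) ↔
    (∃ S : Finset (Fin n), ∀ j < t,
      ∑ i ∈ S, (a i / 10 ^ (j * q) % 10 ^ q) = s / 10 ^ (j * q) % 10 ^ q) := by
  have hcarry (S : Finset (Fin n)) : CarryFree 10 S a := CarryFree.mono hcf (subset_univ S)
  have hblock (S : Finset (Fin n)) (j : ℕ) :
      (∑ i ∈ S, a i) / 10 ^ (j * q) % 10 ^ q = ∑ i ∈ S, a i / 10 ^ (j * q) % 10 ^ q :=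
    (hcarry S).sum_div_pow_mod_pow _ _
  have hpow : (10 : ℕ) ^ n = (10 ^ q) ^ t := by rw [← pow_mul, mul_comm, hn]
  constructor
  · rintro ⟨S, rfl⟩
    exact ⟨S, fun j _ => (hblock S j).symm⟩
  · rintro ⟨S, hS⟩
    refine ⟨S, Nat.eq_of_digits_eq (c := 10 ^ q) (k := t) ?_ (hpow ▸ hs) fun j hj => ?_⟩
    · exact hpow ▸ (hcarry S).sum_lt_pow fun i _ => ha i
    · rw [← pow_mul, mul_comm q j, hblock, hS j hj]

/-- for carry-free numbers, a subset sums to `s` iff it sums to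
`s` block-by-block in blocks of `q` decimal digits. -/
theorem carryless_subset_sum_blocks (n t q : ℕ) (ht : 0 < t) (hq : 0 < q)
    (hn : n = t * q) (s : ℕ) (a : Fin n → ℕ)
    (hs : s < 10 ^ n) (ha : ∀ i, a i < 10 ^ n)
    (hcf : ∀ j, ∑ i : Fin n, a i / 10 ^ j % 10 < 10) :
    (∃ S : Finset (Fin n), ∑ i ∈ S, a i = s) ↔
    (∃ S : Finset (Fin n), ∀ j < t,
      ∑ i ∈ S, (a i / 10 ^ (j * q) % 10 ^ q) = s / 10 ^ (j * q) % 10 ^ q) :=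
  carryless_subset_sum_blocks_general n t q hn s a hs ha hcf
end

section
/- In the polynomial r_S = ∑_{S ⊆ {1,...,n}} ∏_{j=1}^t x_j^{∑_{i∈S} a_i^{[j]} + r − s^{[j]}} · ∏_{i∉S} y_i · ∏_{i∈S} z_i over F₂, the monomials in which every variable x_j has degree exactly r are in bijection with subsets S ⊆ {1,...,n} satisfying ∑_{i∈S} a_i^{[j]} = s^{[j]} for all j ∈ {1,...,t}. -/
open MvPolynomial Finsupp


/-- in the polynomial `r_S` over `F₂`, the monomials in which
every variable `x_j` has degree exactly `r` are in bijection with the subsets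
`S` satisfying `∑_{i∈S} a_i^{[j]} = s^{[j]}` for all `j`. -/
theorem rS_monomials_bijection (n t q : ℕ) (A : Fin n → Fin t → ℕ)
    (sb : Fin t → ℕ) (r : ℕ) (hr : r = 10 ^ q - 1) (hsb : ∀ j, sb j ≤ r) :
    Set.BijOn
      (fun S : Finset (Fin n) =>
        (Finsupp.equivFunOnFinite.symm
          (Sum.elim (fun j : Fin t => (∑ i ∈ S, A i j) + r - sb j)
            (Sum.elim (fun i : Fin n => if i ∈ S then 0 else 1)
              (fun i : Fin n => if i ∈ S then 1 else 0))) :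
          (Fin t ⊕ Fin n ⊕ Fin n) →₀ ℕ))
      {S : Finset (Fin n) | ∀ j : Fin t, ∑ i ∈ S, A i j = sb j}
      {m : (Fin t ⊕ Fin n ⊕ Fin n) →₀ ℕ |
        m ∈ (∑ S : Finset (Fin n),
          (∏ j : Fin t,
            (MvPolynomial.X (Sum.inl j) : MvPolynomial (Fin t ⊕ Fin n ⊕ Fin n) (ZMod 2)) ^
              ((∑ i ∈ S, A i j) + r - sb j)) *
          (∏ i ∈ Sᶜ, MvPolynomial.X (Sum.inr (Sum.inl i))) *
          (∏ i ∈ S, MvPolynomial.X (Sum.inr (Sum.inr i)))).support ∧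
        ∀ j : Fin t, m (Sum.inl j) = r} := by
  set d : Finset (Fin n) → ((Fin t ⊕ Fin n ⊕ Fin n) →₀ ℕ) := fun S =>
    (Finsupp.equivFunOnFinite.symm
      (Sum.elim (fun j : Fin t => (∑ i ∈ S, A i j) + r - sb j)
        (Sum.elim (fun i : Fin n => if i ∈ S then 0 else 1)
          (fun i : Fin n => if i ∈ S then 1 else 0)))) with hd
  have hdapp : ∀ S x, d S x = Sum.elim (fun j : Fin t => (∑ i ∈ S, A i j) + r - sb j)
      (Sum.elim (fun i : Fin n => if i ∈ S then 0 else 1)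
        (fun i : Fin n => if i ∈ S then 1 else 0)) x := fun S x => rfl
  have hdinj : Function.Injective d := by
    intro S S' h
    ext i
    have := congrArg (fun f => f (Sum.inr (Sum.inr i) : Fin t ⊕ Fin n ⊕ Fin n)) h
    simp only [hdapp, Sum.elim_inr] at this
    by_contra hc
    by_cases hi : i ∈ S <;> simp [hi] at hc <;> simp [hi, hc] at this
  -- each summand is a monomial
  have hsummand : ∀ S : Finset (Fin n),
      (∏ j : Fin t,
        (MvPolynomial.X (Sum.inl j) : MvPolynomial (Fin t ⊕ Fin n ⊕ Fin n) (ZMod 2)) ^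
          ((∑ i ∈ S, A i j) + r - sb j)) *
      (∏ i ∈ Sᶜ, MvPolynomial.X (Sum.inr (Sum.inl i))) *
      (∏ i ∈ S, MvPolynomial.X (Sum.inr (Sum.inr i))) = monomial (d S) 1 := by
    intro S
    have h1 : (∏ j : Fin t,
        (MvPolynomial.X (Sum.inl j) : MvPolynomial (Fin t ⊕ Fin n ⊕ Fin n) (ZMod 2)) ^
          ((∑ i ∈ S, A i j) + r - sb j))
        = monomial (∑ j : Fin t, Finsupp.single (Sum.inl j) ((∑ i ∈ S, A i j) + r - sb j)) 1 := by
      rw [monomial_sum_one]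
      simp [X_pow_eq_monomial]
    have h2 : (∏ i ∈ Sᶜ, (MvPolynomial.X (Sum.inr (Sum.inl i)) :
          MvPolynomial (Fin t ⊕ Fin n ⊕ Fin n) (ZMod 2)))
        = monomial (∑ i ∈ Sᶜ, Finsupp.single (Sum.inr (Sum.inl i)) 1) 1 := by
      rw [monomial_sum_one]
      rfl
    have h3 : (∏ i ∈ S, (MvPolynomial.X (Sum.inr (Sum.inr i)) :
          MvPolynomial (Fin t ⊕ Fin n ⊕ Fin n) (ZMod 2)))
        = monomial (∑ i ∈ S, Finsupp.single (Sum.inr (Sum.inr i)) 1) 1 := by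
      rw [monomial_sum_one]
      rfl
    rw [h1, h2, h3, monomial_mul, monomial_mul, mul_one, mul_one]
    refine congrArg (fun e => monomial e (1 : ZMod 2)) ?_
    ext x
    rcases x with j | i | i <;>
      simp [hdapp, Finsupp.single_apply, Finset.sum_ite_eq', Finset.mem_compl]
    rw [Finset.sum_eq_single j (fun b _ hb => by simp [hb]) (by simp)]
    simp
  have hcoeff : ∀ m, MvPolynomial.coeff m (∑ S : Finset (Fin n),
      (∏ j : Fin t,
        (MvPolynomial.X (Sum.inl j) : MvPolynomial (Fin t ⊕ Fin n ⊕ Fin n) (ZMod 2)) ^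
          ((∑ i ∈ S, A i j) + r - sb j)) *
      (∏ i ∈ Sᶜ, MvPolynomial.X (Sum.inr (Sum.inl i))) *
      (∏ i ∈ S, MvPolynomial.X (Sum.inr (Sum.inr i))))
      = ∑ S : Finset (Fin n), if d S = m then (1 : ZMod 2) else 0 := by
    intro m
    rw [MvPolynomial.coeff_sum]
    exact Finset.sum_congr rfl fun S _ => by rw [hsummand S, MvPolynomial.coeff_monomial]
  have hsupp : ∀ m, (m ∈ (∑ S : Finset (Fin n),
      (∏ j : Fin t,
        (MvPolynomial.X (Sum.inl j) : MvPolynomial (Fin t ⊕ Fin n ⊕ Fin n) (ZMod 2)) ^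
          ((∑ i ∈ S, A i j) + r - sb j)) *
      (∏ i ∈ Sᶜ, MvPolynomial.X (Sum.inr (Sum.inl i))) *
      (∏ i ∈ S, MvPolynomial.X (Sum.inr (Sum.inr i)))).support ↔ ∃ S, d S = m) := by
    intro m
    rw [MvPolynomial.mem_support_iff, hcoeff]
    constructor
    · intro h
      by_contra hn
      push_neg at hn
      exact h (Finset.sum_eq_zero fun S _ => if_neg (hn S))
    · rintro ⟨S₀, hS₀⟩
      rw [Finset.sum_eq_single S₀ (fun S _ hne => if_neg (fun h => hne (hdinj (h.trans hS₀.symm))))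
        (fun h => absurd (Finset.mem_univ S₀) h), if_pos hS₀]
      exact one_ne_zero
  constructor
  · intro S hS
    refine ⟨(hsupp (d S)).mpr ⟨S, rfl⟩, fun j => ?_⟩
    have := hdapp S (Sum.inl j)
    simp only [Sum.elim_inl, hS j] at this
    rw [this]
    omega
  constructor
  · intro S _ S' _ h
    exact hdinj h
  · rintro m ⟨hm, hdeg⟩
    obtain ⟨S, hS⟩ := (hsupp m).mp hm
    refine ⟨S, fun j => ?_, hS⟩
    have h1 : d S (Sum.inl j) = r := by rw [hS]; exact hdeg j
    rw [hdapp] at h1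
    simp only [Sum.elim_inl] at h1
    have := hsb j
    omega
end
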